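/- Let P be a right H-comodule algebra over a Hopf algebra H with bijective antipode, and let g : H → P define a left gauge transformation α (i.e., g(1)=1, Δ_P(g(h)) = Σ g(h₂) ⊗ S(h₁)h₃, g convolution invertible, α(f) = Σ f₀g(f₁)). Let D : P → M be any linear map into a P-bimodule M carrying a compatible coaction, and set D' := α ∘ D ∘ α⁻¹ (with α extended to M by m ↦ Σ m₀ g(m₁)). Then (D')² = α ∘ D² ∘ α⁻¹; in particular, if D²(f) = Σ f₀ Ω(f₁) for a linear map Ω : H → M, then (D')²(f) = Σ f₀ g⁻¹(f₁) Ω(f₂) g(f₃), i.e., the curvature transforms as Ω'(h) = Σ g⁻¹(h₁) Ω(h₂) g(h₃). -/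

import Mathlib

open TensorProduct

variable {k : Type*} [Field k]
variable {H : Type*} [Ring H] [HopfAlgebra k H]
variable {P : Type*} [Ring P] [Algebra k P]

noncomputable def conv (f g : H →ₗ[k] P) : H →ₗ[k] P :=
  LinearMap.mul' k P ∘ₗ TensorProduct.map f g ∘ₗ Coalgebra.comul

noncomputable def convUnit : H →ₗ[k] P :=
  Algebra.linearMap k P ∘ₗ Coalgebra.counit

structure IsComodAlg (ΔP : P →ₗ[k] P ⊗[k] H) : Prop where
  coassoc : (TensorProduct.assoc k P H H).toLinearMap ∘ₗ
      (TensorProduct.map ΔP LinearMap.id) ∘ₗ ΔP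
    = (TensorProduct.map LinearMap.id (Coalgebra.comul : H →ₗ[k] H ⊗[k] H)) ∘ₗ ΔP
  counit : (TensorProduct.rid k P).toLinearMap ∘ₗ
      (TensorProduct.map LinearMap.id (Coalgebra.counit : H →ₗ[k] k)) ∘ₗ ΔP
    = LinearMap.id
  map_mul : ∀ f g : P, ΔP (f * g) = ΔP f * ΔP g
  map_one : ΔP 1 = 1

/-- `h ↦ Σ g(h₂) ⊗ S(h₁)h₃`. -/
noncomputable def adCoact (g : H →ₗ[k] P) : H →ₗ[k] P ⊗[k] H :=
  (TensorProduct.map g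
      (LinearMap.mul' k H ∘ₗ
        TensorProduct.map (HopfAlgebra.antipode (R := k)) LinearMap.id)) ∘ₗ
    (TensorProduct.assoc k H H H).toLinearMap ∘ₗ
    (TensorProduct.map (TensorProduct.comm k H H).toLinearMap LinearMap.id) ∘ₗ
    (TensorProduct.map (Coalgebra.comul : H →ₗ[k] H ⊗[k] H) LinearMap.id) ∘ₗ
    (Coalgebra.comul : H →ₗ[k] H ⊗[k] H)

/-- `f ↦ Σ f₀ · g(f₁)`. -/
noncomputable def act (ΔP : P →ₗ[k] P ⊗[k] H) (g : H →ₗ[k] P) : P →ₗ[k] P :=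
  LinearMap.mul' k P ∘ₗ TensorProduct.map LinearMap.id g ∘ₗ ΔP

/-!
Write `α_b f = Σ f₀ b(f₁)`. The operators `Φ ↦ Σ Φ(f₀) X(f₁)` make `Hom(P, A)` a right module
over the convolution algebra `Hom(H, A)`, by coassociativity of the coaction. If `b` satisfies
`Δ_P ∘ b = adCoact b`, then `α_b` is `H`-colinear, and hence `α_a ∘ α_b = α_{b * a}`. This
condition passes from `g` to `g⁻¹`: `b ↦ Δ_P ∘ b` and `b ↦ adCoact b` are both multiplicative
for convolution (the latter is conjugation of `b ↦ b ⊗ 1` by the unit `h ↦ 1 ⊗ h`, whose inverse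
is `h ↦ 1 ⊗ S h`), so they agree on `g⁻¹` because they agree on `g`. Hence `α_{g⁻¹}` inverts `α_g`,
and `α_g ∘ α_Ω ∘ α_{g⁻¹} = α_{g⁻¹ * Ω * g}`.
-/

open WithConv Algebra.TensorProduct

local notation "ι₁" => (includeLeft : P →ₐ[k] P ⊗[k] H)
local notation "ι₂" => (includeRight : H →ₐ[k] P ⊗[k] H)

lemma MonoidHom.apply_eq_apply_of_mul_eq_one {M N : Type*} [Monoid M] [Monoid N]
    (f₁ f₂ : M →* N) {x y : M} (hxy : x * y = 1) (hyx : y * x = 1) (h : f₁ x = f₂ x) :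
    f₁ y = f₂ y :=
  left_inv_eq_right_inv (a := f₁ x) (by rw [← map_mul, hyx, map_one])
    (by rw [h, ← map_mul, hxy, map_one])

lemma LinearMap.mul'_comp_map_mul'_comp_map {A M N Q : Type*} [Ring A] [Algebra k A]
    [AddCommMonoid M] [Module k M] [AddCommMonoid N] [Module k N] [AddCommMonoid Q] [Module k Q]
    (f : M →ₗ[k] A) (g : N →ₗ[k] A) (h : Q →ₗ[k] A) :
    mul' k A ∘ₗ TensorProduct.map (mul' k A ∘ₗ TensorProduct.map f g) h =
      mul' k A ∘ₗ TensorProduct.map f (mul' k A ∘ₗ TensorProduct.map g h) ∘ₗ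
        (TensorProduct.assoc k M N Q).toLinearMap := by
  ext m n q
  simp [mul_assoc]

lemma conv_assoc {A : Type*} [Ring A] [Algebra k A] (f g h : H →ₗ[k] A) :
    conv (conv f g) h = conv f (conv g h) :=
  congrArg ofConv (mul_assoc (toConv f) (toConv g) (toConv h))

section CoactConv

variable {A B : Type*} [Ring A] [Algebra k A] [Ring B] [Algebra k B]

noncomputable def AlgHom.compConvHom (φ : A →ₐ[k] B) :
    WithConv (H →ₗ[k] A) →* WithConv (H →ₗ[k] B) where
  toFun X := toConv (φ.toLinearMap ∘ₗ X.ofConv)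
  map_one' := by ext; simp
  map_mul' X Y := WithConv.ext (LinearMap.algHom_comp_convMul_distrib φ X Y)

variable {ΔP : P →ₗ[k] P ⊗[k] H}

variable (ΔP) in
noncomputable def coactConv (Φ : P →ₗ[k] A) (X : WithConv (H →ₗ[k] A)) : P →ₗ[k] A :=
  LinearMap.mul' k A ∘ₗ TensorProduct.map Φ X.ofConv ∘ₗ ΔP

lemma act_eq_coactConv (b : H →ₗ[k] P) : act ΔP b = coactConv ΔP LinearMap.id (toConv b) := rfl

lemma coactConv_mul (hP : IsComodAlg ΔP) (Φ : P →ₗ[k] A) (X Y : WithConv (H →ₗ[k] A)) :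
    coactConv ΔP (coactConv ΔP Φ X) Y = coactConv ΔP Φ (X * Y) := by
  calc coactConv ΔP (coactConv ΔP Φ X) Y
      = LinearMap.mul' k A ∘ₗ
          TensorProduct.map (LinearMap.mul' k A ∘ₗ TensorProduct.map Φ X.ofConv) Y.ofConv ∘ₗ
          TensorProduct.map ΔP LinearMap.id ∘ₗ ΔP := by
        simp only [coactConv, ← LinearMap.comp_assoc, ← TensorProduct.map_comp, LinearMap.comp_id]
    _ = LinearMap.mul' k A ∘ₗ
          TensorProduct.map Φ (LinearMap.mul' k A ∘ₗ TensorProduct.map X.ofConv Y.ofConv) ∘ₗ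
          TensorProduct.map LinearMap.id Coalgebra.comul ∘ₗ ΔP := by
        rw [← hP.coassoc]
        simp only [← LinearMap.comp_assoc]
        rw [LinearMap.mul'_comp_map_mul'_comp_map]
        simp only [LinearMap.comp_assoc]
    _ = coactConv ΔP Φ (X * Y) := by
        simp only [coactConv, LinearMap.convMul_def, ← LinearMap.comp_assoc,
          ← TensorProduct.map_comp, LinearMap.comp_id]

lemma coactConv_one (hP : IsComodAlg ΔP) (Φ : P →ₗ[k] A) : coactConv ΔP Φ 1 = Φ := by
  calc coactConv ΔP Φ 1
      = (LinearMap.mul' k A ∘ₗ TensorProduct.map Φ (Algebra.linearMap k A)) ∘ₗ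
          TensorProduct.map LinearMap.id Coalgebra.counit ∘ₗ ΔP := by
        rw [coactConv, LinearMap.convOne_def, ofConv_toConv, ← LinearMap.comp_id Φ,
          TensorProduct.map_comp]
        simp only [LinearMap.comp_assoc, LinearMap.comp_id]
    _ = Φ ∘ₗ (TensorProduct.rid k P).toLinearMap ∘ₗ
          TensorProduct.map LinearMap.id Coalgebra.counit ∘ₗ ΔP := by
        simp only [← LinearMap.comp_assoc]
        congr 2
        refine TensorProduct.ext' fun p c => ?_
        simp [Algebra.algebraMap_eq_smul_one]
    _ = Φ := by rw [hP.counit, LinearMap.comp_id]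

lemma AlgHom.comp_coactConv (φ : A →ₐ[k] B) (Φ : P →ₗ[k] A) (X : WithConv (H →ₗ[k] A)) :
    φ.toLinearMap ∘ₗ coactConv ΔP Φ X = coactConv ΔP (φ.toLinearMap ∘ₗ Φ) (φ.compConvHom X) := by
  simp only [coactConv, AlgHom.compConvHom, MonoidHom.coe_mk, OneHom.coe_mk, ofConv_toConv,
    ← LinearMap.comp_assoc, AlgHom.comp_mul', TensorProduct.map_comp]

lemma coactConv_comp_of_colinear {T : P →ₗ[k] P}
    (hT : ΔP ∘ₗ T = TensorProduct.map T LinearMap.id ∘ₗ ΔP)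
    (Φ : P →ₗ[k] A) (X : WithConv (H →ₗ[k] A)) :
    coactConv ΔP Φ X ∘ₗ T = coactConv ΔP (Φ ∘ₗ T) X := by
  simp only [coactConv, LinearMap.comp_assoc, hT]
  simp only [← LinearMap.comp_assoc, ← TensorProduct.map_comp, LinearMap.comp_id]

end CoactConv

noncomputable def IsComodAlg.toAlgHom {ΔP : P →ₗ[k] P ⊗[k] H} (hP : IsComodAlg ΔP) :
    P →ₐ[k] P ⊗[k] H :=
  AlgHom.ofLinearMap ΔP hP.map_one hP.map_mul

section Covariant

variable {ΔP : P →ₗ[k] P ⊗[k] H}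

lemma mul'_comp_map_includeLeft_comp_includeRight {M : Type*} [AddCommMonoid M] [Module k M]
    (f : M →ₗ[k] P) :
    LinearMap.mul' k (P ⊗[k] H) ∘ₗ TensorProduct.map ((ι₁).toLinearMap ∘ₗ f) (ι₂).toLinearMap =
      TensorProduct.map f LinearMap.id := by
  ext m h
  simp

lemma coactConv_includeLeft_comp (T : P →ₗ[k] P) :
    coactConv ΔP ((ι₁).toLinearMap ∘ₗ T) (toConv (ι₂).toLinearMap) =
      TensorProduct.map T LinearMap.id ∘ₗ ΔP := by
  rw [coactConv, ofConv_toConv, ← LinearMap.comp_assoc,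
    mul'_comp_map_includeLeft_comp_includeRight]

lemma includeRight_mul_includeRight_antipode :
    toConv (ι₂).toLinearMap * (ι₂).compConvHom (toConv (HopfAlgebra.antipode k)) = 1 := by
  change (ι₂).compConvHom (toConv LinearMap.id) * _ = 1
  rw [← map_mul, LinearMap.id_mul_antipode, map_one]

lemma includeRight_antipode_mul_includeRight :
    (ι₂).compConvHom (toConv (HopfAlgebra.antipode k)) * toConv (ι₂).toLinearMap = 1 := by
  change _ * (ι₂).compConvHom (toConv LinearMap.id) = 1
  rw [← map_mul, LinearMap.antipode_mul_id, map_one]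

lemma coactConv_self_includeRight_antipode (hP : IsComodAlg ΔP) :
    coactConv ΔP ΔP ((ι₂).compConvHom (toConv (HopfAlgebra.antipode k))) = (ι₁).toLinearMap := by
  have hΔ : coactConv ΔP (ι₁).toLinearMap (toConv (ι₂).toLinearMap) = ΔP := by
    simpa using coactConv_includeLeft_comp (ΔP := ΔP) LinearMap.id
  rw [← coactConv_one hP (ι₁).toLinearMap, ← includeRight_mul_includeRight_antipode,
    ← coactConv_mul hP, hΔ]

lemma toConv_adCoact (b : H →ₗ[k] P) :
    toConv (adCoact b) = (ι₂).compConvHom (toConv (HopfAlgebra.antipode k)) *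
      (ι₁).compConvHom (toConv b) * toConv (ι₂).toLinearMap := by
  have hcoassoc : TensorProduct.map Coalgebra.comul LinearMap.id ∘ₗ Coalgebra.comul =
      (TensorProduct.assoc k H H H).symm.toLinearMap ∘ₗ
        TensorProduct.map LinearMap.id Coalgebra.comul ∘ₗ (Coalgebra.comul : H →ₗ[k] H ⊗[k] H) :=
    Coalgebra.coassoc_symm.symm
  ext1
  rw [adCoact, hcoassoc, mul_assoc]
  simp only [LinearMap.convMul_def, AlgHom.compConvHom, MonoidHom.coe_mk, OneHom.coe_mk,
    ofConv_toConv, ← LinearMap.comp_assoc]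
  rw [mul'_comp_map_includeLeft_comp_includeRight,
    ← LinearMap.map_comp_lTensor H _ (TensorProduct.map b LinearMap.id), LinearMap.lTensor_def,
    ← LinearMap.comp_assoc]
  congr 2
  ext x y z
  simp

noncomputable def adCoactMonoidHom : WithConv (H →ₗ[k] P) →* WithConv (H →ₗ[k] P ⊗[k] H) where
  toFun b := toConv (adCoact b.ofConv)
  map_one' := by
    rw [toConv_adCoact, map_one, mul_one, includeRight_antipode_mul_includeRight]
  map_mul' b c := by
    simp only [toConv_adCoact, toConv_ofConv, map_mul, mul_assoc]
    rw [← mul_assoc (toConv _) ((ι₂).compConvHom _), includeRight_mul_includeRight_antipode,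
      one_mul]

lemma adCoact_eq_of_mul_eq_one (hP : IsComodAlg ΔP) {g g' : H →ₗ[k] P}
    (hg : ΔP ∘ₗ g = adCoact g) (h₁ : toConv g * toConv g' = 1) (h₂ : toConv g' * toConv g = 1) :
    ΔP ∘ₗ g' = adCoact g' :=
  congrArg ofConv <| MonoidHom.apply_eq_apply_of_mul_eq_one hP.toAlgHom.compConvHom
    adCoactMonoidHom h₁ h₂ (congrArg toConv hg)

/-- In Sweedler notation the proof reads
`Σ f₀₀ b(f₁)₀ ⊗ f₀₁ b(f₁)₁ = Σ f₀ b(f₃) ⊗ f₁ S(f₂) f₄ = Σ f₀ b(f₁) ⊗ f₂`. -/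
lemma act_colinear (hP : IsComodAlg ΔP) {b : H →ₗ[k] P} (hb : ΔP ∘ₗ b = adCoact b) :
    ΔP ∘ₗ act ΔP b = TensorProduct.map (act ΔP b) LinearMap.id ∘ₗ ΔP := by
  calc ΔP ∘ₗ act ΔP b
      = coactConv ΔP ΔP (toConv (adCoact b)) := by
        rw [← hb, act_eq_coactConv]
        exact hP.toAlgHom.comp_coactConv LinearMap.id (toConv b)
    _ = coactConv ΔP ((ι₁).toLinearMap ∘ₗ act ΔP b) (toConv (ι₂).toLinearMap) := by
        rw [toConv_adCoact, ← coactConv_mul hP, ← coactConv_mul hP,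
          coactConv_self_includeRight_antipode hP, act_eq_coactConv, AlgHom.comp_coactConv,
          LinearMap.comp_id]
    _ = TensorProduct.map (act ΔP b) LinearMap.id ∘ₗ ΔP := coactConv_includeLeft_comp _

lemma act_comp_act (hP : IsComodAlg ΔP) (a : H →ₗ[k] P) {b : H →ₗ[k] P}
    (hb : ΔP ∘ₗ b = adCoact b) : act ΔP a ∘ₗ act ΔP b = act ΔP (conv b a) := by
  rw [act_eq_coactConv a, coactConv_comp_of_colinear (act_colinear hP hb), LinearMap.id_comp,
    act_eq_coactConv, coactConv_mul hP]
  rfl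

end Covariant

theorem statement_14 (ΔP : P →ₗ[k] P ⊗[k] H) (hP : IsComodAlg ΔP)
    (g g' : H →ₗ[k] P)
    (hgcoact : ΔP ∘ₗ g = adCoact g)
    (hinv : conv g g' = (convUnit : H →ₗ[k] P) ∧
            conv g' g = (convUnit : H →ₗ[k] P))
    (D : P →ₗ[k] P) :
    ((act ΔP g ∘ₗ D ∘ₗ act ΔP g') ∘ₗ (act ΔP g ∘ₗ D ∘ₗ act ΔP g')
      = act ΔP g ∘ₗ (D ∘ₗ D) ∘ₗ act ΔP g') ∧
    (∀ Ω : H →ₗ[k] P, ΔP ∘ₗ Ω = adCoact Ω →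
      D ∘ₗ D = act ΔP Ω →
      (act ΔP g ∘ₗ D ∘ₗ act ΔP g') ∘ₗ (act ΔP g ∘ₗ D ∘ₗ act ΔP g')
        = act ΔP (conv (conv g' Ω) g)) := by
  have hg' : ΔP ∘ₗ g' = adCoact g' :=
    adCoact_eq_of_mul_eq_one hP hgcoact (congrArg toConv hinv.1) (congrArg toConv hinv.2)
  have hinv_act : act ΔP g' ∘ₗ act ΔP g = LinearMap.id := by
    rw [act_comp_act hP g' hgcoact, hinv.1, act_eq_coactConv]
    exact coactConv_one hP LinearMap.id
  have hsquare : (act ΔP g ∘ₗ D ∘ₗ act ΔP g') ∘ₗ (act ΔP g ∘ₗ D ∘ₗ act ΔP g')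
      = act ΔP g ∘ₗ (D ∘ₗ D) ∘ₗ act ΔP g' := by
    simp only [LinearMap.comp_assoc]
    rw [← LinearMap.comp_assoc (D ∘ₗ act ΔP g') (act ΔP g), hinv_act, LinearMap.id_comp]
  refine ⟨hsquare, fun Ω hΩ hcurv => ?_⟩
  rw [hsquare, hcurv, ← LinearMap.comp_assoc, act_comp_act hP g hΩ, act_comp_act hP _ hg',
    conv_assoc]
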